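/- arXiv:1109.2226 — 4 statements merged into one kernel-verified Lean document; each statement's English description precedes it below -/
import Mathlib

section
/- For any finite nonempty subset X of the unit sphere S^{d-1} in R^d and any nonnegative even integer l, the average (1/|X|^2) * sum over x,y in X of (x·y)^l is at least ((l-1)!! (d-2)!!)/((d+l-2)!!); for odd l the average is at least 0. -/
open MeasureTheory MvPolynomial
open scoped BigOperators RealInnerProductSpace Classical

noncomputable section

abbrev Euc (d : ℕ) := EuclideanSpace ℝ (Fin d)

/-- Double factorial, with `dfac n = 1` for `n ≤ 1`. -/
def dfac : ℕ → ℕ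
  | 0 => 1
  | 1 => 1
  | (n+2) => (n+2) * dfac n

/-- Dimension of the space of harmonic homogeneous polynomials of degree `i`
in `d` variables. -/
def harmDim (d i : ℕ) : ℕ :=
  if i = 0 then 1 else if i = 1 then d
  else Nat.choose (d + i - 1) i - Nat.choose (d + i - 3) (i - 2)

/-- `Q` is the family of Gegenbauer polynomials for `S^{d-1}`: `Q i` has degree `i`,
they are orthogonal on `[-1,1]` with respect to the weight `(1-t^2)^((d-3)/2)`,
and they are normalized by `Q i (1) = dim Harm_i(ℝ^d)`. -/
def IsGegenbauer (d : ℕ) (Q : ℕ → Polynomial ℝ) : Prop :=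
  (∀ i, (Q i).natDegree = i) ∧
  (∀ i j, i ≠ j →
    ∫ t in Set.Ioo (-1 : ℝ) 1,
      (Q i).eval t * (Q j).eval t * Real.rpow (1 - t ^ 2) (((d : ℝ) - 3) / 2) = 0) ∧
  (∀ i, (Q i).eval 1 = (harmDim d i : ℝ))

/-- Average of a function over the sphere of radius `r` about the origin,
with respect to the (rotation invariant) Hausdorff measure. -/
def sphAvg (d : ℕ) (r : ℝ) (f : Euc d → ℝ) : ℝ :=
  (∫ x in Metric.sphere (0 : Euc d) r, f x ∂(μH[(d : ℝ) - 1])) /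
    ((μH[(d : ℝ) - 1]) (Metric.sphere (0 : Euc d) r)).toReal

/-- A spherical `t`-design on the unit sphere. -/
def IsSphericalDesign (d t : ℕ) (X : Finset (Euc d)) : Prop :=
  ∀ f : MvPolynomial (Fin d) ℝ, f.totalDegree ≤ t →
    sphAvg d 1 (fun x => eval (fun i => x i) f) =
      (∑ x ∈ X, eval (fun i => x i) f) / (X.card : ℝ)

/-- A polynomial is harmonic if its Laplacian vanishes. -/
def IsHarmonicPoly {d : ℕ} (f : MvPolynomial (Fin d) ℝ) : Prop :=
  ∑ i : Fin d, pderiv i (pderiv i f) = 0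

/-- Euclidean `t`-design. -/
def IsEuclideanDesign (d t : ℕ) (X : Finset (Euc d)) (w : Euc d → ℝ) : Prop :=
  ∀ f : MvPolynomial (Fin d) ℝ, f.totalDegree ≤ t →
    (∑ r ∈ X.image (fun x => ‖x‖),
      (∑ x ∈ X.filter (fun x => ‖x‖ = r), w x) *
        sphAvg d r (fun x => eval (fun i => x i) f))
      = ∑ x ∈ X, w x * eval (fun i => x i) f

/-- `x' = x / ‖x‖`. -/
def unitize {d : ℕ} (x : Euc d) : Euc d := ‖x‖⁻¹ • x

/-- Strong Euclidean `t`-design, with respect to the Gegenbauer family `Q`. -/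
def IsStrongEuclideanDesign (d t : ℕ) (Q : ℕ → Polynomial ℝ)
    (X : Finset (Euc d)) (w : Euc d → ℝ) : Prop :=
  ∀ i ≤ t, ∀ j, 1 ≤ j → j ≤ t →
    (∑ x ∈ X, ∑ y ∈ X, w x * w y * (‖x‖ * ‖y‖) ^ i *
      (Q j).eval ⟪unitize x, unitize y⟫) = 0

/-- Restriction of a function on `ℝ^d` to a subset `T`. -/
def restrictFun {d : ℕ} (T : Set (Euc d)) (f : Euc d → ℝ) : T → ℝ := fun x => f x

/-- `Hom_j(T)`: restrictions to `T` of homogeneous degree `j` polynomials. -/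
def HomOn (d j : ℕ) (T : Set (Euc d)) : Submodule ℝ (T → ℝ) :=
  Submodule.span ℝ
    { f | ∃ p : MvPolynomial (Fin d) ℝ, p.IsHomogeneous j ∧
        f = restrictFun T (fun x => eval (fun i => x i) p) }

/-- `(‖x‖ Hom_k)(T)`: restrictions to `T` of `‖x‖ p(x)` with `p` homogeneous of degree `k`. -/
def NormHomOn (d k : ℕ) (T : Set (Euc d)) : Submodule ℝ (T → ℝ) :=
  Submodule.span ℝ
    { f | ∃ p : MvPolynomial (Fin d) ℝ, p.IsHomogeneous k ∧
        f = restrictFun T (fun x => ‖x‖ * eval (fun i => x i) p) }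

/-- `Hom'_j(T) = Hom_j(T) + (‖x‖ Hom_{j-1})(T)` (for `j ≥ 1`). -/
def HomOn' (d j : ℕ) (T : Set (Euc d)) : Submodule ℝ (T → ℝ) :=
  HomOn d j T ⊔ NormHomOn d (j - 1) T

/-- `F` belongs to `Pol'_j(ℝ^d) = Pol_j(ℝ^d) + ‖x‖ Pol_{j-1}(ℝ^d)` (as a space of
functions on `ℝ^d`), for `j : ℤ` with the convention that negative-degree spaces are `0`. -/
def InPol' (d : ℕ) (j : ℤ) (F : Euc d → ℝ) : Prop :=
  ∃ f g : MvPolynomial (Fin d) ℝ,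
    (f = 0 ∨ (f.totalDegree : ℤ) ≤ j) ∧ (g = 0 ∨ (g.totalDegree : ℤ) ≤ j - 1) ∧
    F = fun x => eval (fun i => x i) f + ‖x‖ * eval (fun i => x i) g

/-- `Pol'_j(T)`: restrictions to `T` of elements of `Pol'_j(ℝ^d)`. -/
def PolOn' (d j : ℕ) (T : Set (Euc d)) : Submodule ℝ (T → ℝ) :=
  Submodule.span ℝ { f | ∃ F : Euc d → ℝ, InPol' d (j : ℤ) F ∧ f = restrictFun T F }

/-!
Let `g` be a standard Gaussian vector in `ℝ^d`. Its expectation is only needed on polynomials,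
where it is the linear functional with `𝔼[g^α] = ∏ i, (αᵢ - 1)!!` (zero if some `αᵢ` is odd),
characterised by Gaussian integration by parts `𝔼[gᵢ p(g)] = 𝔼[∂ᵢ p(g)]`.

In `(ℝ^d)^{⊗l}` put `u = ∑ x ∈ X, x^{⊗l}` and `M = 𝔼[g^{⊗l}]`. Then
`∑ x ∈ X, ∑ y ∈ X, ⟪x, y⟫ ^ l = ‖u‖²`, `⟪u, M⟫ = ∑ x ∈ X, 𝔼[⟪x, g⟫ ^ l] = |X| (l - 1)!!` and
`‖M‖² = (l - 1)!! 𝔼[‖g‖ ^ l] = (l - 1)!! d (d + 2) ⋯ (d + l - 2)` for even `l`, so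
Cauchy–Schwarz `⟪u, M⟫² ≤ ‖u‖² ‖M‖²` is the inequality.
-/

/-- `normalMoment n = 𝔼[gⁿ]` for a standard normal `g`. -/
def normalMoment : ℕ → ℝ
  | 0 => 1
  | 1 => 0
  | (n + 2) => (n + 1) * normalMoment n

lemma normalMoment_succ (n : ℕ) : normalMoment (n + 1) = n * normalMoment (n - 1) := by
  cases n with
  | zero => simp [normalMoment]
  | succ n => simp [normalMoment]

section GaussianExpectation

variable {σ : Type*} [Fintype σ]

/-- `p ↦ 𝔼[p(g)]` for a standard Gaussian vector `g`, via `𝔼[g^α] = ∏ i, 𝔼[gᵢ^αᵢ]`. -/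
def gaussianExpectation (σ : Type*) [Fintype σ] : MvPolynomial σ ℝ →ₗ[ℝ] ℝ :=
  (basisMonomials σ ℝ).constr ℝ fun α => ∏ i, normalMoment (α i)

lemma gaussianExpectation_monomial (α : σ →₀ ℕ) (c : ℝ) :
    gaussianExpectation σ (monomial α c) = c * ∏ i, normalMoment (α i) := by
  rw [show monomial α c = c • monomial α 1 by rw [smul_monomial, smul_eq_mul, mul_one],
    map_smul, smul_eq_mul]
  congr 1
  simpa [gaussianExpectation, coe_basisMonomials] using
    (basisMonomials σ ℝ).constr_basis ℝ (fun α => ∏ i, normalMoment (α i)) α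

lemma gaussianExpectation_one : gaussianExpectation σ 1 = 1 := by
  simpa [normalMoment] using gaussianExpectation_monomial (σ := σ) 0 1

lemma gaussianExpectation_C_mul (c : ℝ) (p : MvPolynomial σ ℝ) :
    gaussianExpectation σ (C c * p) = c * gaussianExpectation σ p := by
  rw [C_mul', map_smul, smul_eq_mul]

/-- Gaussian integration by parts (Stein's identity). -/
lemma gaussianExpectation_X_mul (i : σ) (p : MvPolynomial σ ℝ) :
    gaussianExpectation σ (X i * p) = gaussianExpectation σ (pderiv i p) := by
  induction p using MvPolynomial.induction_on' with
  | add p q hp hq => simp only [mul_add, map_add, hp, hq]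
  | monomial α c =>
    rw [X, monomial_mul, one_mul, pderiv_monomial, gaussianExpectation_monomial,
      gaussianExpectation_monomial, ← Finset.mul_prod_erase _ _ (Finset.mem_univ i),
      ← Finset.mul_prod_erase _ _ (Finset.mem_univ i)]
    have h_off : ∀ j ∈ Finset.univ.erase i,
        normalMoment ((Finsupp.single i 1 + α : σ →₀ ℕ) j) =
          normalMoment ((α - Finsupp.single i 1 : σ →₀ ℕ) j) := by
      intro j hj
      simp [Finsupp.single_eq_of_ne (Finset.ne_of_mem_erase hj)]
    rw [Finset.prod_congr rfl h_off]
    simp [add_comm 1, normalMoment_succ]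
    ring

lemma gaussianExpectation_X (i : σ) : gaussianExpectation σ (X i) = 0 := by
  simpa using gaussianExpectation_X_mul i 1

lemma gaussianExpectation_linear_pow (a : σ → ℝ) (l : ℕ) :
    gaussianExpectation σ ((∑ i, C (a i) * X i) ^ l) =
      normalMoment l * (∑ i, a i ^ 2) ^ (l / 2) := by
  set q : MvPolynomial σ ℝ := ∑ i, C (a i) * X i
  have pderiv_q (i : σ) : pderiv i q = C (a i) := by
    simp [q, pderiv_X, Pi.single_apply]
  induction l using Nat.twoStepInduction with
  | zero => simp [gaussianExpectation_one, normalMoment]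
  | one => simp [q, map_sum, gaussianExpectation_C_mul, gaussianExpectation_X, normalMoment]
  | more n ih _ =>
    have h_step (i : σ) : gaussianExpectation σ (C (a i) * (X i * q ^ (n + 1))) =
        a i ^ 2 * ((n + 1) * gaussianExpectation σ (q ^ n)) := by
      rw [gaussianExpectation_C_mul, gaussianExpectation_X_mul, pderiv_pow, pderiv_q,
        Nat.add_sub_cancel, show ((n + 1 : ℕ) : MvPolynomial σ ℝ) * q ^ n * C (a i) =
          C ((n + 1) * a i) * q ^ n by simp; ring, gaussianExpectation_C_mul]
      ring
    calc gaussianExpectation σ (q ^ (n + 2))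
        = ∑ i, gaussianExpectation σ (C (a i) * (X i * q ^ (n + 1))) := by
          rw [← map_sum, pow_succ', Finset.sum_mul]
          simp only [mul_assoc]
      _ = _ := by
          rw [Finset.sum_congr rfl fun i _ => h_step i, ← Finset.sum_mul, ih,
            show (n + 2) / 2 = n / 2 + 1 by omega, normalMoment]
          ring

lemma gaussianExpectation_sumSq_pow (m : ℕ) :
    gaussianExpectation σ ((∑ i, X i ^ 2) ^ m) =
      ∏ k ∈ Finset.range m, (Fintype.card σ + 2 * k : ℝ) := by
  set S : MvPolynomial σ ℝ := ∑ i, X i ^ 2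
  have pderiv_S (i : σ) : pderiv i S = 2 * X i := by
    simp [S, pderiv_X, Pi.single_apply]
  have euler (m : ℕ) : ∑ i, X i * pderiv i (S ^ m) = C (2 * m : ℝ) * S ^ m := by
    cases m with
    | zero => simp
    | succ m =>
      have h_term (i : σ) :
          X i * pderiv i (S ^ (m + 1)) = C (2 * (m + 1) : ℝ) * S ^ m * X i ^ 2 := by
        rw [pderiv_pow, pderiv_S, Nat.add_sub_cancel, map_mul, map_add]
        simp only [map_natCast, map_ofNat, map_one]
        push_cast
        ring
      rw [Finset.sum_congr rfl fun i _ => h_term i, ← Finset.mul_sum, pow_succ]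
      push_cast
      ring
  induction m with
  | zero => simp [gaussianExpectation_one]
  | succ m ih =>
    calc gaussianExpectation σ (S ^ (m + 1))
        = ∑ i, gaussianExpectation σ (X i * (X i * S ^ m)) := by
          rw [← map_sum, pow_succ', Finset.sum_mul]
          simp only [S, sq, mul_assoc]
      _ = ∑ i, (gaussianExpectation σ (S ^ m) +
            gaussianExpectation σ (X i * pderiv i (S ^ m))) := by
          refine Finset.sum_congr rfl fun i _ => ?_
          rw [gaussianExpectation_X_mul, pderiv_mul, pderiv_X_self, one_mul, map_add]
      _ = _ := by
          rw [Finset.sum_add_distrib, ← map_sum (gaussianExpectation σ) (fun i => X i * _),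
            euler, gaussianExpectation_C_mul, ih, Finset.prod_range_succ, Finset.sum_const,
            Finset.card_univ, nsmul_eq_mul]
          ring

end GaussianExpectation

section Tensor

variable {σ : Type*} [Fintype σ]

def tensorPower (x : σ → ℝ) (l : ℕ) (f : Fin l → σ) : ℝ := ∏ k, x (f k)

def gaussianMomentTensor (σ : Type*) [Fintype σ] (l : ℕ) (f : Fin l → σ) : ℝ :=
  gaussianExpectation σ (∏ k, X (f k))

lemma sum_tensorPower_mul_tensorPower (x y : σ → ℝ) (l : ℕ) :
    ∑ f, tensorPower x l f * tensorPower y l f = (∑ i, x i * y i) ^ l := by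
  simp only [tensorPower, Fintype.sum_pow, Finset.prod_mul_distrib]

lemma sum_tensorPower_mul_gaussianMomentTensor (x : σ → ℝ) (l : ℕ) :
    ∑ f, tensorPower x l f * gaussianMomentTensor σ l f =
      normalMoment l * (∑ i, x i ^ 2) ^ (l / 2) := by
  rw [← gaussianExpectation_linear_pow, Fintype.sum_pow, map_sum]
  refine Finset.sum_congr rfl fun f _ => ?_
  rw [Finset.prod_mul_distrib, ← map_prod, gaussianExpectation_C_mul, tensorPower,
    gaussianMomentTensor]

lemma sum_gaussianMomentTensor_sq (l : ℕ) :
    ∑ f, gaussianMomentTensor σ l f ^ 2 =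
      normalMoment l * ∏ k ∈ Finset.range (l / 2), (Fintype.card σ + 2 * k : ℝ) := by
  have h_poly : ∑ f, C (gaussianMomentTensor σ l f) * ∏ k, X (f k) =
      C (normalMoment l) * (∑ i, X i ^ 2 : MvPolynomial σ ℝ) ^ (l / 2) := by
    refine MvPolynomial.funext fun x => ?_
    simpa [tensorPower, mul_comm] using sum_tensorPower_mul_gaussianMomentTensor x l
  calc ∑ f, gaussianMomentTensor σ l f ^ 2
      = gaussianExpectation σ (∑ f, C (gaussianMomentTensor σ l f) * ∏ k, X (f k)) := by
        simp only [map_sum, gaussianExpectation_C_mul, sq, gaussianMomentTensor]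
    _ = _ := by rw [h_poly, gaussianExpectation_C_mul, gaussianExpectation_sumSq_pow]

end Tensor

lemma sq_sum_mul_div_sum_sq_le {ι : Type*} (s : Finset ι) (u v : ι → ℝ) :
    (∑ i ∈ s, u i * v i) ^ 2 / ∑ i ∈ s, v i ^ 2 ≤ ∑ i ∈ s, u i ^ 2 := by
  rcases (Finset.sum_nonneg fun i _ => sq_nonneg (v i)).eq_or_lt with h | h
  · rw [← h, div_zero]
    exact Finset.sum_nonneg fun i _ => sq_nonneg (u i)
  · rw [div_le_iff₀ h]
    exact Finset.sum_mul_sq_le_sq_mul_sq s u v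

lemma inner_pow_eq_sum_tensorPower {d : ℕ} (x y : Euc d) (l : ℕ) :
    ⟪x, y⟫ ^ l = ∑ f, tensorPower x l f * tensorPower y l f := by
  rw [sum_tensorPower_mul_tensorPower]
  simp [PiLp.inner_apply, mul_comm]

theorem normalMoment_div_le_sum_inner_pow {d : ℕ} (l : ℕ) (X : Finset (Euc d))
    (hX : X.Nonempty) (hsph : ∀ x ∈ X, ‖x‖ = 1) :
    normalMoment l / ∏ k ∈ Finset.range (l / 2), (d + 2 * k : ℝ) ≤
      1 / (X.card : ℝ) ^ 2 * ∑ x ∈ X, ∑ y ∈ X, ⟪x, y⟫ ^ l := by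
  set u : (Fin l → Fin d) → ℝ := fun f => ∑ x ∈ X, tensorPower x l f
  have h_uu : ∑ x ∈ X, ∑ y ∈ X, ⟪x, y⟫ ^ l = ∑ f, u f ^ 2 := by
    simp only [inner_pow_eq_sum_tensorPower, u, sq, Finset.sum_mul_sum]
    symm
    rw [Finset.sum_comm]
    exact Finset.sum_congr rfl fun x _ => Finset.sum_comm
  have h_uv : ∑ f, u f * gaussianMomentTensor (Fin d) l f = X.card * normalMoment l := by
    simp only [u, Finset.sum_mul]
    rw [Finset.sum_comm, ← nsmul_eq_mul, ← Finset.sum_const]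
    refine Finset.sum_congr rfl fun x hx => ?_
    rw [sum_tensorPower_mul_gaussianMomentTensor, ← EuclideanSpace.real_norm_sq_eq, hsph x hx]
    simp
  have h_cs := sq_sum_mul_div_sum_sq_le Finset.univ u (gaussianMomentTensor (Fin d) l)
  rw [h_uv, sum_gaussianMomentTensor_sq, Fintype.card_fin, ← h_uu] at h_cs
  set P := ∏ k ∈ Finset.range (l / 2), (d + 2 * k : ℝ)
  have h_cancel : (X.card * normalMoment l) ^ 2 / (normalMoment l * P) =
      X.card ^ 2 * (normalMoment l / P) := by
    rcases eq_or_ne (normalMoment l) 0 with h | h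
    · simp [h]
    · field_simp
  have hn : (0 : ℝ) < X.card := by exact_mod_cast hX.card_pos
  rw [h_cancel] at h_cs
  rw [one_div_mul_eq_div, le_div_iff₀ (by positivity)]
  linarith

lemma dfac_pos : ∀ n, 0 < dfac n
  | 0 | 1 => Nat.one_pos
  | n + 2 => Nat.mul_pos (by omega) (dfac_pos n)

lemma dfac_eq_mul_dfac_sub_two {n : ℕ} (hn : 1 ≤ n) : dfac n = n * dfac (n - 2) := by
  obtain _ | _ | n := n
  · omega
  · rfl
  · rfl

lemma normalMoment_eq_ite (n : ℕ) :
    normalMoment n = if Even n then (dfac (n - 1) : ℝ) else 0 := by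
  induction n using Nat.twoStepInduction with
  | zero => simp [normalMoment, dfac]
  | one => simp [normalMoment]
  | more n ih _ =>
    rw [normalMoment, ih]
    rcases Nat.even_or_odd n with hn | hn
    · simp [hn, Nat.even_add_one, show n + 2 - 1 = n + 1 by omega,
        dfac_eq_mul_dfac_sub_two (Nat.le_add_left 1 n)]
    · simp [hn, Nat.not_even_iff_odd.mpr hn, Nat.even_add_one]

lemma dfac_add_two_mul_sub_two {d : ℕ} (hd : 1 ≤ d) (m : ℕ) :
    dfac (d + 2 * m - 2) = dfac (d - 2) * ∏ k ∈ Finset.range m, (d + 2 * k) := by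
  induction m with
  | zero => simp
  | succ m ih =>
    rw [show d + 2 * (m + 1) - 2 = d + 2 * m by omega, dfac_eq_mul_dfac_sub_two (by omega), ih,
      Finset.prod_range_succ]
    ring

/-- **Sidelnikov's inequality.** For a finite nonempty subset `X` of the unit sphere
`S^{d-1}` and `l ∈ ℕ`, the average `(1/|X|²) ∑_{x,y∈X} (x⋅y)^l` is at least
`((l-1)!! (d-2)!!)/((d+l-2)!!)` if `l` is even, and at least `0` if `l` is odd. -/
theorem sidelnikov_inequality (d l : ℕ) (X : Finset (Euc d)) (hX : X.Nonempty)
    (hsph : ∀ x ∈ X, ‖x‖ = 1) :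
    (1 / (X.card : ℝ) ^ 2) * ∑ x ∈ X, ∑ y ∈ X, (⟪x, y⟫ : ℝ) ^ l ≥
      (if Even l then (dfac (l - 1) * dfac (d - 2) : ℝ) / (dfac (d + l - 2) : ℝ)
        else 0) := by
  have hd : 1 ≤ d := by
    obtain ⟨x, hx⟩ := hX
    refine Nat.one_le_iff_ne_zero.mpr fun h => ?_
    subst h
    simpa [Subsingleton.elim x 0] using hsph x hx
  refine le_trans (le_of_eq ?_) (normalMoment_div_le_sum_inner_pow l X hX hsph)
  rw [normalMoment_eq_ite]
  split_ifs with hl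
  · obtain ⟨m, rfl⟩ := hl
    rw [← two_mul, Nat.mul_div_cancel_left m two_pos, dfac_add_two_mul_sub_two hd]
    have := dfac_pos (d - 2)
    push_cast
    field_simp
  · rw [zero_div]

end
end

section
/- Let X be a finite subset of R^d \ {0}, w : X → R a weight function, and l a nonnegative integer. Then sum over x,y in X of w(x)w(y)(x·y)^l is at least A_l * (sum over x in X of w(x)||x||^l)^2, where A_l = ((l-1)!!(d-2)!!)/((d+l-2)!!) if l is even and A_l = 0 if l is odd. -/
open MeasureTheory MvPolynomial
open scoped BigOperators RealInnerProductSpace Classical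

noncomputable section

/-!
Expanding `⟪x, y⟫ ^ l` by the multinomial theorem writes the left side as
`∑ₖ (l choose k) Mₖ²`, a sum over multi-indices `k` with `|k| = l`, where `Mₖ = ∑ₓ w x xᵏ` are the
weighted moments of `X`; in particular it is nonnegative, which settles odd `l`.
For `l = 2m`, expanding `‖x‖ ^ (2m) = (∑ᵢ xᵢ²) ^ m` gives `∑ₓ w x ‖x‖ ^ (2m) = ∑_b (m choose b) M_{2b}`,
and Cauchy–Schwarz with weights `(2m choose 2b)` bounds its square by
`C = ∑_b (m choose b)² / (2m choose 2b)` times the even-index part of the left side.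
Finally `C = (m!)² / (2m)! · ∑_b ∏ᵢ centralBinom bᵢ`, and the last sum `g m` satisfies
`(m + 1) g (m + 1) = 2 (d + 2m) g m` because `(n + 1) centralBinom (n + 1) = 2 (2n + 1) centralBinom n`;
solving the recurrence gives `C = 1 / A_l`.
-/

open Finset Nat

lemma dfac_eq_doubleFactorial : ∀ n, dfac n = n‼
  | 0 => rfl
  | 1 => rfl
  | n + 2 => by rw [dfac, doubleFactorial_add_two, dfac_eq_doubleFactorial n]

namespace Nat

lemma factorial_two_mul_eq (m : ℕ) : (2 * m)! = 2 ^ m * m ! * (2 * m - 1)‼ := by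
  rcases m with _ | m
  · rfl
  · rw [show 2 * (m + 1) = (2 * m + 1) + 1 by ring, factorial_eq_mul_doubleFactorial,
      show 2 * m + 1 + 1 = 2 * (m + 1) by ring, doubleFactorial_two_mul,
      show 2 * (m + 1) - 1 = 2 * m + 1 by omega]

lemma doubleFactorial_sub_two_mul_prod_range {d : ℕ} (hd : 1 ≤ d) (m : ℕ) :
    (d - 2)‼ * ∏ i ∈ range m, (d + 2 * i) = (d + 2 * m - 2)‼ := by
  induction m with
  | zero => simp
  | succ m ih =>
    rw [prod_range_succ, ← mul_assoc, ih]
    obtain h | h := Nat.lt_or_ge (d + 2 * m) 2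
    · obtain ⟨rfl, rfl⟩ : d = 1 ∧ m = 0 := by omega
      rfl
    · rw [show d + 2 * (m + 1) - 2 = d + 2 * m - 2 + 2 by omega, doubleFactorial_add_two,
        show d + 2 * m - 2 + 2 = d + 2 * m by omega, mul_comm]

end Nat

section

variable {ι : Type*} [Fintype ι]

lemma multinomial_sq_div_multinomial_two_nsmul {b : ι → ℕ} {m : ℕ} (hb : ∑ i, b i = m) :
    (multinomial univ b : ℝ) ^ 2 / multinomial univ (2 • b) =
      (m ! : ℝ) ^ 2 / (2 * m)! * ∏ i, ((b i).centralBinom : ℝ) := by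
  have hmult (f : ι → ℕ) : (multinomial univ f : ℝ) = (∑ i, f i)! / ∏ i, ((f i)! : ℝ) := by
    rw [eq_div_iff (by positivity), mul_comm]
    exact_mod_cast multinomial_spec univ f
  have hcentral : ∏ i, ((b i).centralBinom : ℝ) = (∏ i, ((2 * b i)! : ℝ)) /
      ((∏ i, ((b i)! : ℝ)) * ∏ i, ((b i)! : ℝ)) := by
    rw [← prod_mul_distrib, ← prod_div_distrib]
    refine prod_congr rfl fun i _ => ?_
    rw [centralBinom_eq_two_mul_choose, cast_choose ℝ (by omega), two_mul, Nat.add_sub_cancel]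
  simp only [hmult, hcentral, Pi.smul_apply, smul_eq_mul, ← mul_sum, hb]
  field_simp

variable [DecidableEq ι]

namespace Finset

lemma sum_piAntidiag_succ_filter_ne_zero {M : Type*} [AddCommMonoid M] (i : ι) (n : ℕ)
    (f : (ι → ℕ) → M) :
    ∑ b ∈ piAntidiag univ (n + 1) with b i ≠ 0, f b =
      ∑ c ∈ piAntidiag univ n, f (c + Pi.single i 1) := by
  have hcancel : ∀ b : ι → ℕ, b i ≠ 0 → b - Pi.single i 1 + Pi.single i 1 = b := by
    intro b hb
    ext j
    rcases eq_or_ne j i with rfl | h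
    · simp only [Pi.add_apply, Pi.sub_apply, Pi.single_eq_same]
      omega
    · simp [h]
  refine (sum_nbij' (· + Pi.single i 1) (· - Pi.single i 1) ?_ ?_ ?_ ?_ fun _ _ => rfl).symm
  · intro c hc
    simp_all [sum_add_distrib]
  · intro b hb
    simp only [mem_filter, mem_piAntidiag, mem_univ, implies_true, and_true] at hb
    have hsum := congrArg (∑ j, · j) (hcancel b hb.2)
    simp only [Pi.add_apply, sum_add_distrib, Fintype.sum_pi_single', hb.1] at hsum
    simpa using hsum
  · intro c _
    simp
  · intro b hb
    exact hcancel b (mem_filter.1 hb).2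

end Finset

variable (ι) in
def centralBinomSum (m : ℕ) : ℕ :=
  ∑ b ∈ piAntidiag (univ : Finset ι) m, ∏ i, (b i).centralBinom

lemma succ_mul_prod_centralBinom_add_single (c : ι → ℕ) (i : ι) :
    (c i + 1) * ∏ j, ((c + Pi.single i 1 : ι → ℕ) j).centralBinom =
      2 * (2 * c i + 1) * ∏ j, (c j).centralBinom := by
  rw [← mul_prod_erase univ _ (mem_univ i), ← mul_prod_erase univ (fun j => (c j).centralBinom)
    (mem_univ i), prod_congr rfl fun j hj => by rw [Pi.add_apply, Pi.single_eq_of_ne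
      (ne_of_mem_erase hj), add_zero]]
  simp only [Pi.add_apply, Pi.single_eq_same]
  rw [← mul_assoc, succ_mul_centralBinom_succ, mul_assoc]

lemma succ_mul_centralBinomSum_succ (m : ℕ) :
    (m + 1) * centralBinomSum ι (m + 1) = 2 * (Fintype.card ι + 2 * m) * centralBinomSum ι m := by
  have hcoord (i : ι) :
      ∑ b ∈ piAntidiag univ (m + 1), b i * ∏ j, (b j).centralBinom =
        ∑ c ∈ piAntidiag univ m, 2 * (2 * c i + 1) * ∏ j, (c j).centralBinom := by
    rw [← sum_filter_of_ne (p := fun b => b i ≠ 0) fun b _ hb hbi => hb (by rw [hbi, zero_mul]),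
      sum_piAntidiag_succ_filter_ne_zero]
    refine sum_congr rfl fun c _ => ?_
    simpa using succ_mul_prod_centralBinom_add_single c i
  calc (m + 1) * centralBinomSum ι (m + 1)
      = ∑ i, ∑ b ∈ piAntidiag univ (m + 1), b i * ∏ j, (b j).centralBinom := by
        rw [centralBinomSum, mul_sum, sum_comm]
        refine sum_congr rfl fun b hb => ?_
        rw [← sum_mul, (mem_piAntidiag.1 hb).1]
    _ = ∑ c ∈ piAntidiag univ m, 2 * (Fintype.card ι + 2 * m) * ∏ j, (c j).centralBinom := by
        simp_rw [hcoord]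
        rw [sum_comm]
        refine sum_congr rfl fun c hc => ?_
        rw [← sum_mul, ← mul_sum, sum_add_distrib, ← mul_sum, (mem_piAntidiag.1 hc).1]
        simp [add_comm]
    _ = 2 * (Fintype.card ι + 2 * m) * centralBinomSum ι m := by rw [centralBinomSum, mul_sum]

lemma centralBinomSum_mul_factorial (m : ℕ) :
    centralBinomSum ι m * m ! = 2 ^ m * ∏ i ∈ range m, (Fintype.card ι + 2 * i) := by
  induction m with
  | zero => simp [centralBinomSum]
  | succ m ih =>
    calc centralBinomSum ι (m + 1) * (m + 1)!
        = (m + 1) * centralBinomSum ι (m + 1) * m ! := by rw [factorial_succ]; ring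
      _ = 2 * (Fintype.card ι + 2 * m) * (centralBinomSum ι m * m !) := by
        rw [succ_mul_centralBinomSum_succ]; ring
      _ = 2 ^ (m + 1) * ∏ i ∈ range (m + 1), (Fintype.card ι + 2 * i) := by
        rw [ih, prod_range_succ]; ring

variable (ι) in
def multinomialRatioSum (m : ℕ) : ℝ :=
  ∑ b ∈ piAntidiag (univ : Finset ι) m, (multinomial univ b : ℝ) ^ 2 / multinomial univ (2 • b)

lemma doubleFactorial_mul_multinomialRatioSum (hι : 0 < Fintype.card ι) (m : ℕ) :
    ((2 * m - 1)‼ * (Fintype.card ι - 2)‼ : ℝ) / (Fintype.card ι + 2 * m - 2)‼ *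
      multinomialRatioSum ι m = 1 := by
  have hsum : multinomialRatioSum ι m = (m ! : ℝ) ^ 2 / (2 * m)! * centralBinomSum ι m := by
    rw [multinomialRatioSum, centralBinomSum, cast_sum, mul_sum]
    refine sum_congr rfl fun b hb => ?_
    rw [multinomial_sq_div_multinomial_two_nsmul (mem_piAntidiag.1 hb).1, cast_prod]
  have hkey : (2 * m - 1)‼ * (Fintype.card ι - 2)‼ * (m ! ^ 2 * centralBinomSum ι m) =
      (Fintype.card ι + 2 * m - 2)‼ * (2 * m)! := by
    calc (2 * m - 1)‼ * (Fintype.card ι - 2)‼ * (m ! ^ 2 * centralBinomSum ι m)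
        = (Fintype.card ι - 2)‼ * (centralBinomSum ι m * m !) * (m ! * (2 * m - 1)‼) := by ring
      _ = ((Fintype.card ι - 2)‼ * ∏ i ∈ range m, (Fintype.card ι + 2 * i)) *
            (2 ^ m * m ! * (2 * m - 1)‼) := by rw [centralBinomSum_mul_factorial]; ring
      _ = (Fintype.card ι + 2 * m - 2)‼ * (2 * m)! := by
        rw [doubleFactorial_sub_two_mul_prod_range hι, factorial_two_mul_eq]
  rw [hsum, div_mul_eq_mul_div, div_eq_one_iff_eq (by positivity)]
  field_simp
  have hkeyℝ := congrArg (Nat.cast : ℕ → ℝ) hkey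
  push_cast at hkeyℝ
  linear_combination hkeyℝ

def weightedMoment (X : Finset (EuclideanSpace ℝ ι)) (w : EuclideanSpace ℝ ι → ℝ)
    (k : ι → ℕ) : ℝ :=
  ∑ x ∈ X, w x * ∏ i, x i ^ k i

variable (X : Finset (EuclideanSpace ℝ ι)) (w : EuclideanSpace ℝ ι → ℝ)

lemma sum_sum_mul_inner_pow (l : ℕ) :
    ∑ x ∈ X, ∑ y ∈ X, w x * w y * ⟪x, y⟫ ^ l =
      ∑ k ∈ piAntidiag univ l, (multinomial univ k : ℝ) * weightedMoment X w k ^ 2 := by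
  have hexpand (x y : EuclideanSpace ℝ ι) : w x * w y * ⟪x, y⟫ ^ l =
      ∑ k ∈ piAntidiag univ l,
        (multinomial univ k : ℝ) * ((w x * ∏ i, x i ^ k i) * (w y * ∏ i, y i ^ k i)) := by
    simp only [PiLp.inner_apply, RCLike.inner_apply, conj_trivial, sum_pow_eq_sum_piAntidiag,
      mul_sum]
    refine sum_congr rfl fun k _ => ?_
    simp only [mul_pow, prod_mul_distrib]
    ring
  simp_rw [hexpand, weightedMoment, sq, sum_mul_sum, mul_sum]
  exact (sum_congr rfl fun x _ => sum_comm).trans sum_comm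

lemma sum_mul_norm_pow_two_mul (m : ℕ) :
    ∑ x ∈ X, w x * ‖x‖ ^ (2 * m) =
      ∑ b ∈ piAntidiag univ m, (multinomial univ b : ℝ) * weightedMoment X w (2 • b) := by
  have hnorm (x : EuclideanSpace ℝ ι) : ‖x‖ ^ (2 * m) = (∑ i, x i ^ 2) ^ m := by
    simp [pow_mul, EuclideanSpace.norm_sq_eq]
  simp_rw [hnorm, sum_pow_eq_sum_piAntidiag, weightedMoment, mul_sum]
  rw [sum_comm]
  refine sum_congr rfl fun b _ => sum_congr rfl fun x _ => ?_
  simp only [Pi.smul_apply, smul_eq_mul, pow_mul]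
  ring

lemma sum_multinomial_two_nsmul_le (m : ℕ) :
    ∑ b ∈ piAntidiag univ m, (multinomial univ (2 • b) : ℝ) * weightedMoment X w (2 • b) ^ 2 ≤
      ∑ k ∈ piAntidiag univ (2 * m), (multinomial univ k : ℝ) * weightedMoment X w k ^ 2 := by
  calc _ = ∑ k ∈ (piAntidiag univ m).map ⟨(2 • ·), nsmul_right_injective two_ne_zero⟩,
        (multinomial univ k : ℝ) * weightedMoment X w k ^ 2 := (sum_map _ _ _).symm
    _ ≤ _ := by
      rw [map_nsmul_piAntidiag_univ m two_ne_zero]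
      exact sum_le_sum_of_subset_of_nonneg (filter_subset _ _) fun k _ _ => by positivity

lemma sq_sum_mul_norm_pow_le (m : ℕ) :
    (∑ x ∈ X, w x * ‖x‖ ^ (2 * m)) ^ 2 ≤ multinomialRatioSum ι m *
      ∑ k ∈ piAntidiag univ (2 * m), (multinomial univ k : ℝ) * weightedMoment X w k ^ 2 := by
  rw [sum_mul_norm_pow_two_mul]
  calc _ ≤ multinomialRatioSum ι m * ∑ b ∈ piAntidiag univ m,
        (multinomial univ (2 • b) : ℝ) * weightedMoment X w (2 • b) ^ 2 := by
        refine sum_sq_le_sum_mul_sum_of_sq_le_mul _ (fun _ _ => by positivity)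
          (fun _ _ => by positivity) fun b _ => le_of_eq ?_
        have : (multinomial univ (2 • b) : ℝ) ≠ 0 := cast_ne_zero.2 (multinomial_pos _ _).ne'
        field_simp
    _ ≤ _ := mul_le_mul_of_nonneg_left (sum_multinomial_two_nsmul_le X w m)
        (sum_nonneg fun _ _ => by positivity)

end

/-- **Generalized Sidelnikov inequality** (Neumaier–Seidel). -/
theorem generalized_sidelnikov (d l : ℕ) (X : Finset (Euc d))
    (h0 : (0 : Euc d) ∉ X) (w : Euc d → ℝ) :
    (∑ x ∈ X, ∑ y ∈ X, w x * w y * (⟪x, y⟫ : ℝ) ^ l) ≥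
      (if Even l then (dfac (l - 1) * dfac (d - 2) : ℝ) / (dfac (d + l - 2) : ℝ)
        else 0) * (∑ x ∈ X, w x * ‖x‖ ^ l) ^ 2 := by
  rcases Nat.eq_zero_or_pos d with rfl | hd
  · obtain rfl : X = ∅ := eq_empty_of_forall_notMem fun x hx =>
      h0 (Subsingleton.elim (α := Euc 0) x 0 ▸ hx)
    simp
  rw [sum_sum_mul_inner_pow, ge_iff_le]
  split_ifs with hl
  · obtain ⟨m, rfl⟩ := hl
    have hconst := doubleFactorial_mul_multinomialRatioSum (ι := Fin d) (by simpa using hd) m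
    rw [Fintype.card_fin] at hconst
    simp only [← two_mul, dfac_eq_doubleFactorial]
    calc _ ≤ ((2 * m - 1)‼ * (d - 2)‼ : ℝ) / (d + 2 * m - 2)‼ * (multinomialRatioSum (Fin d) m *
          ∑ k ∈ piAntidiag univ (2 * m), (multinomial univ k : ℝ) * weightedMoment X w k ^ 2) :=
          mul_le_mul_of_nonneg_left (sq_sum_mul_norm_pow_le X w m) (by positivity)
      _ = _ := by rw [← mul_assoc, hconst, one_mul]
  · rw [zero_mul]
    exact sum_nonneg fun k _ => by positivity
end
end

section
/- Let RS be a union of p concentric spheres about the origin in R^d with positive radii. Then the restriction of Hom'_j(R^d) := Hom_j(R^d) + ||x||Hom_{j-1}(R^d) to RS decomposes as a direct sum: Hom'_j(RS) = Hom_j(RS) ⊕ (||x||Hom_{j-1})(RS). -/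
open MeasureTheory MvPolynomial
open scoped BigOperators RealInnerProductSpace Classical

noncomputable section

/-!
Under `x ↦ -x`, restrictions of `Hom_j` pick up the sign `(-1)^j` and restrictions of
`‖x‖ Hom_{j-1}` the opposite sign `(-1)^(j-1)`. A union of spheres about the origin is
invariant under `x ↦ -x`, and there a function with both behaviours vanishes.
-/

theorem MvPolynomial.IsHomogeneous.eval_smul {σ R : Type*} [CommSemiring R]
    {φ : MvPolynomial σ R} {n : ℕ} (hφ : φ.IsHomogeneous n) (c : R) (v : σ → R) :
    eval (c • v) φ = c ^ n * eval v φ := by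
  rw [eval_eq, eval_eq, Finset.mul_sum]
  refine Finset.sum_congr rfl fun m hm => ?_
  have hdeg : ∑ i ∈ m.support, m i = n := by
    rw [← hφ (mem_support_iff.mp hm), Finsupp.weight_apply, Finsupp.sum]
    simp
  simp only [Pi.smul_apply, smul_eq_mul, mul_pow, Finset.prod_mul_distrib,
    Finset.prod_pow_eq_pow_sum, hdeg]
  ring

def parityOn {d : ℕ} (T : Set (Euc d)) (n : ℕ) : Submodule ℝ (T → ℝ) where
  carrier := {f | ∀ x y : T, (y : Euc d) = -x → f y = (-1) ^ n * f x}
  add_mem' {f g} hf hg x y hxy := by simp only [Pi.add_apply, hf x y hxy, hg x y hxy]; ring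
  zero_mem' _ _ _ := by simp
  smul_mem' c f hf x y hxy := by simp only [Pi.smul_apply, smul_eq_mul, hf x y hxy]; ring

theorem eval_neg_of_isHomogeneous {d n : ℕ} {p : MvPolynomial (Fin d) ℝ}
    (hp : p.IsHomogeneous n) (x : Euc d) :
    eval (fun i => (-x) i) p = (-1) ^ n * eval (fun i => x i) p := by
  have hneg : (fun i => (-x) i) = (-1 : ℝ) • fun i => x i := by ext i; simp
  rw [hneg, hp.eval_smul]

theorem homOn_le_parityOn (d j : ℕ) (T : Set (Euc d)) : HomOn d j T ≤ parityOn T j := by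
  refine Submodule.span_le.mpr ?_
  rintro _ ⟨p, hp, rfl⟩ x y hxy
  simp only [restrictFun, hxy, eval_neg_of_isHomogeneous hp]

theorem normHomOn_le_parityOn (d k : ℕ) (T : Set (Euc d)) : NormHomOn d k T ≤ parityOn T k := by
  refine Submodule.span_le.mpr ?_
  rintro _ ⟨p, hp, rfl⟩ x y hxy
  simp only [restrictFun, hxy, norm_neg, eval_neg_of_isHomogeneous hp]
  ring

theorem disjoint_parityOn_succ {d : ℕ} {T : Set (Euc d)} (hT : ∀ x ∈ T, -x ∈ T) (n : ℕ) :
    Disjoint (parityOn T n) (parityOn T (n + 1)) := by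
  rw [Submodule.disjoint_def]
  intro f hf hf'
  funext x
  have h := (hf x ⟨-x, hT x x.2⟩ rfl).symm.trans (hf' x ⟨-x, hT x x.2⟩ rfl)
  have hsign : (-1 : ℝ) ^ n ≠ 0 := by positivity
  have : (-1 : ℝ) ^ n * (2 * f x) = 0 := by linear_combination h
  simpa [hsign] using this

theorem disjoint_homOn_normHomOn {d j : ℕ} {T : Set (Euc d)} (hT : ∀ x ∈ T, -x ∈ T)
    (hj : 1 ≤ j) : Disjoint (HomOn d j T) (NormHomOn d (j - 1) T) := by
  obtain ⟨k, rfl⟩ := Nat.exists_eq_add_of_le' hj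
  exact (disjoint_parityOn_succ hT k).symm.mono (homOn_le_parityOn d _ T)
    (normHomOn_le_parityOn d k T)

theorem homOn'_direct_sum_general (d p j : ℕ) (hj : 1 ≤ j) (r : Fin p → ℝ) :
    (HomOn' d j (⋃ i, Metric.sphere (0 : Euc d) (r i)) =
        HomOn d j (⋃ i, Metric.sphere (0 : Euc d) (r i)) ⊔
          NormHomOn d (j - 1) (⋃ i, Metric.sphere (0 : Euc d) (r i))) ∧
      Disjoint (HomOn d j (⋃ i, Metric.sphere (0 : Euc d) (r i)))
        (NormHomOn d (j - 1) (⋃ i, Metric.sphere (0 : Euc d) (r i))) := by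
  refine ⟨rfl, disjoint_homOn_normHomOn (fun x hx => ?_) hj⟩
  obtain ⟨i, hi⟩ := Set.mem_iUnion.mp hx
  exact Set.mem_iUnion.mpr ⟨i, by simpa using hi⟩

/-- The restriction of `Hom'_j(ℝ^d) = Hom_j(ℝ^d) + ‖x‖ Hom_{j-1}(ℝ^d)` to a union `RS` of
concentric spheres of positive radii decomposes as a direct sum
`Hom'_j(RS) = Hom_j(RS) ⊕ (‖x‖ Hom_{j-1})(RS)`. -/
theorem homOn'_direct_sum (d p j : ℕ) (hj : 1 ≤ j) (r : Fin p → ℝ)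
    (hrpos : ∀ i, 0 < r i) (hrinj : Function.Injective r) :
    (HomOn' d j (⋃ i, Metric.sphere (0 : Euc d) (r i)) =
        HomOn d j (⋃ i, Metric.sphere (0 : Euc d) (r i)) ⊔
          NormHomOn d (j - 1) (⋃ i, Metric.sphere (0 : Euc d) (r i))) ∧
      Disjoint (HomOn d j (⋃ i, Metric.sphere (0 : Euc d) (r i)))
        (NormHomOn d (j - 1) (⋃ i, Metric.sphere (0 : Euc d) (r i))) :=
  homOn'_direct_sum_general d p j hj r

end
end

section
/- Let RS be the union of p concentric spheres of distinct positive radii r_1,...,r_p about the origin in R^d. For every f in Hom'_j(R^d) = Hom_j(R^d) + ||x||Hom_{j-1}(R^d), the restriction of f to RS lies in the sum over i = 1,...,p of Hom'_{j+i}(RS). -/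
open MeasureTheory MvPolynomial
open scoped BigOperators RealInnerProductSpace Classical

noncomputable section

/-! On `RS` the norm only takes the values `r_i`, so `∏ i, (1 - ‖x‖ / r_i)` vanishes there. This
product has constant term `1`; expanding it gives `1 = ∑_{k<p} c_k ‖x‖^{k+1}` on `RS`, hence
`F = ∑_k c_k ‖x‖^{k+1} F` for every `F`. Multiplication by `‖x‖^n` maps `Hom'_j` into `Hom'_{j+n}`:
an even power `‖x‖^{2a}` is the homogeneous polynomial `(∑ x_i²)^a`, and an odd power contributes
one more factor `‖x‖`, which swaps the two summands of `Hom'`. -/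

theorem exists_sum_mul_pow_succ_eq_one {K ι : Type*} [Field K] (s : Finset ι) (r : ι → K)
    (hr : ∀ i ∈ s, r i ≠ 0) :
    ∃ c : ℕ → K, ∀ i ∈ s, ∑ k ∈ Finset.range s.card, c k * r i ^ (k + 1) = 1 := by
  set P : Polynomial K := ∏ i ∈ s, (1 - Polynomial.C (r i)⁻¹ * Polynomial.X)
  have hdeg : P.natDegree ≤ s.card :=
    calc P.natDegree ≤ ∑ i ∈ s, (1 - Polynomial.C (r i)⁻¹ * Polynomial.X).natDegree :=
          Polynomial.natDegree_prod_le _ _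
      _ ≤ ∑ _i ∈ s, 1 := by gcongr; compute_degree
      _ = s.card := by simp
  have hcoeff_zero : P.coeff 0 = 1 := by
    simp [P, Polynomial.coeff_zero_eq_eval_zero, Polynomial.eval_prod]
  have hroot : ∀ i ∈ s, P.eval (r i) = 0 := fun i hi => by
    rw [Polynomial.eval_prod]
    exact Finset.prod_eq_zero hi (by simp [hr i hi])
  refine ⟨fun k => -P.coeff (k + 1), fun i hi => ?_⟩
  have h := hroot i hi
  rw [Polynomial.eval_eq_sum_range' (Nat.lt_succ_of_le hdeg), Finset.sum_range_succ',
    hcoeff_zero] at h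
  simp only [neg_mul, Finset.sum_neg_distrib]
  linear_combination -h

def normSqPoly (d : ℕ) : MvPolynomial (Fin d) ℝ := ∑ i, X i ^ 2

theorem isHomogeneous_normSqPoly (d : ℕ) : (normSqPoly d).IsHomogeneous 2 :=
  IsHomogeneous.sum _ _ _ fun i _ => (isHomogeneous_X ℝ i).pow 2

theorem eval_normSqPoly {d : ℕ} (x : Euc d) : eval (fun i => x i) (normSqPoly d) = ‖x‖ ^ 2 := by
  simp [normSqPoly, EuclideanSpace.norm_sq_eq]

theorem restrictFun_norm_pow_mul_mem_homOn' {d m : ℕ} (T : Set (Euc d))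
    {q : MvPolynomial (Fin d) ℝ} (hq : q.IsHomogeneous m) (n : ℕ) :
    restrictFun T (fun x => ‖x‖ ^ n * eval (fun i => x i) q) ∈ HomOn' d (m + n) T := by
  have hdeg : ∀ a, (normSqPoly d ^ a * q).IsHomogeneous (2 * a + m) := fun a => by
    simpa [mul_comm] using ((isHomogeneous_normSqPoly d).pow a).mul hq
  obtain ⟨a, rfl | rfl⟩ := Nat.even_or_odd' n
  · refine Submodule.mem_sup_left (Submodule.subset_span ⟨normSqPoly d ^ a * q, ?_, ?_⟩)
    · simpa [add_comm] using hdeg a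
    · funext x
      simp [restrictFun, eval_normSqPoly, pow_mul]
  · refine Submodule.mem_sup_right (Submodule.subset_span ⟨normSqPoly d ^ a * q, ?_, ?_⟩)
    · simpa [add_comm, ← add_assoc] using hdeg a
    · funext x
      simp only [restrictFun, map_mul, map_pow, eval_normSqPoly]
      ring

theorem restrictFun_norm_pow_mul_add_mem_homOn' {d j : ℕ} (hj : 1 ≤ j) (T : Set (Euc d))
    {f g : MvPolynomial (Fin d) ℝ} (hf : f.IsHomogeneous j) (hg : g.IsHomogeneous (j - 1))
    (n : ℕ) :
    restrictFun T (fun x => ‖x‖ ^ n * (eval (fun k => x k) f + ‖x‖ * eval (fun k => x k) g)) ∈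
      HomOn' d (j + n) T := by
  have hsplit : restrictFun T (fun x =>
        ‖x‖ ^ n * (eval (fun k => x k) f + ‖x‖ * eval (fun k => x k) g)) =
      restrictFun T (fun x => ‖x‖ ^ n * eval (fun k => x k) f) +
        restrictFun T (fun x => ‖x‖ ^ (n + 1) * eval (fun k => x k) g) := by
    funext x
    simp only [restrictFun, Pi.add_apply]
    ring
  rw [hsplit]
  refine add_mem (restrictFun_norm_pow_mul_mem_homOn' T hf n) ?_
  simpa [show j - 1 + (n + 1) = j + n by omega] using
    restrictFun_norm_pow_mul_mem_homOn' T hg (n + 1)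

theorem homOn'_shift_general (d p j : ℕ) (hj : 1 ≤ j) (r : Fin p → ℝ)
    (hrpos : ∀ i, 0 < r i)
    (f g : MvPolynomial (Fin d) ℝ)
    (hf : f.IsHomogeneous j) (hg : g.IsHomogeneous (j - 1)) :
    restrictFun (⋃ i, Metric.sphere (0 : Euc d) (r i))
        (fun x => eval (fun k => x k) f + ‖x‖ * eval (fun k => x k) g) ∈
      ⨆ i : Fin p, HomOn' d (j + (i : ℕ) + 1) (⋃ i, Metric.sphere (0 : Euc d) (r i)) := by
  set T := ⋃ i, Metric.sphere (0 : Euc d) (r i)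
  set F : Euc d → ℝ := fun x => eval (fun k => x k) f + ‖x‖ * eval (fun k => x k) g
  obtain ⟨c, hc⟩ := exists_sum_mul_pow_succ_eq_one Finset.univ r fun i _ => (hrpos i).ne'
  rw [Finset.card_univ, Fintype.card_fin] at hc
  have hF : restrictFun T F =
      ∑ k ∈ Finset.range p, c k • restrictFun T (fun x => ‖x‖ ^ (k + 1) * F x) := by
    funext ⟨x, hx⟩
    obtain ⟨i, hi⟩ := Set.mem_iUnion.mp hx
    rw [mem_sphere_zero_iff_norm] at hi
    simp only [restrictFun, Finset.sum_apply, Pi.smul_apply, smul_eq_mul, ← mul_assoc,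
      ← Finset.sum_mul, hi, hc i (Finset.mem_univ i), one_mul]
  rw [hF]
  refine Submodule.sum_mem _ fun k hk => Submodule.smul_mem _ _ ?_
  exact le_iSup (fun i : Fin p => HomOn' d (j + i + 1) T) ⟨k, Finset.mem_range.mp hk⟩
    (restrictFun_norm_pow_mul_add_mem_homOn' hj T hf hg (k + 1))

/-- For `RS` a union of `p` concentric spheres of distinct positive radii, the restriction
to `RS` of any element of `Hom'_j(ℝ^d)` lies in `∑_{i=1}^{p} Hom'_{j+i}(RS)`. -/
theorem homOn'_shift (d p j : ℕ) (hj : 1 ≤ j) (r : Fin p → ℝ)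
    (hrpos : ∀ i, 0 < r i) (hrinj : Function.Injective r)
    (f g : MvPolynomial (Fin d) ℝ)
    (hf : f.IsHomogeneous j) (hg : g.IsHomogeneous (j - 1)) :
    restrictFun (⋃ i, Metric.sphere (0 : Euc d) (r i))
        (fun x => eval (fun k => x k) f + ‖x‖ * eval (fun k => x k) g) ∈
      ⨆ i : Fin p, HomOn' d (j + (i : ℕ) + 1) (⋃ i, Metric.sphere (0 : Euc d) (r i)) :=
  homOn'_shift_general d p j hj r hrpos f g hf hg

end
end
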